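/- For every natural number n, the number of sequences (s_1, …, s_n) with each s_i ∈ {A, A⁻¹, B, B⁻¹} such that for every k with 1 ≤ k ≤ n the graph distance in the Schreier graph 𝓗 from 1/2 to (s_k ∘ s_{k−1} ∘ ⋯ ∘ s_1)(1/2) equals k, is exactly 2^n. Equivalently, the geodesic growth function of 𝓗 at basepoint 1/2 is l(z) = 1/(1 − 2z). -/

import Mathlib

open SimpleGraph

/-- The generator `A` of Thompson's group `F`. -/
noncomputable def Amap (x : ℝ) : ℝ :=
  if x ≤ 1/2 then x/2 else if x ≤ 3/4 then x - 1/4 else 2*x - 1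

/-- The inverse map of `Amap`. -/
noncomputable def Ainvmap (y : ℝ) : ℝ :=
  if y ≤ 1/4 then 2*y else if y ≤ 1/2 then y + 1/4 else (y + 1)/2

/-- The generator `B` of Thompson's group `F`. -/
noncomputable def Bmap (x : ℝ) : ℝ :=
  if x ≤ 1/2 then x else if x ≤ 3/4 then x/2 + 1/4 else if x ≤ 7/8 then x - 1/8 else 2*x - 1

/-- The inverse map of `Bmap`. -/
noncomputable def Binvmap (y : ℝ) : ℝ :=
  if y ≤ 1/2 then y else if y ≤ 5/8 then 2*y - 1/2 else if y ≤ 3/4 then y + 1/8 else (y + 1)/2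

/-- The set of dyadic rationals strictly between 0 and 1. -/
def dyadics : Set ℝ :=
  {x | (∃ k m : ℕ, 0 < k ∧ 0 < m ∧ x = (k : ℝ) / 2 ^ m) ∧ 0 < x ∧ x < 1}

/-- The Schreier graph `𝓗` of the action of Thompson's group `F` on the dyadic rationals. -/
def schreier : SimpleGraph dyadics where
  Adj x y := x ≠ y ∧ ((y : ℝ) = Amap x ∨ (y : ℝ) = Bmap x ∨ (x : ℝ) = Amap y ∨ (x : ℝ) = Bmap y)
  symm := ⟨by rintro x y ⟨hne, hc⟩; exact ⟨hne.symm, by tauto⟩⟩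
  loopless := ⟨by rintro x ⟨hne, -⟩; exact hne rfl⟩

open Classical in
/-- Graph distance in the Schreier graph `𝓗`, as a function of real numbers
(junk value `0` if one of the points is not a dyadic rational in `(0,1)`). -/
noncomputable def distD (x y : ℝ) : ℕ :=
  if hx : x ∈ dyadics then if hy : y ∈ dyadics then schreier.dist ⟨x, hx⟩ ⟨y, hy⟩ else 0 else 0


/-- binary digit sum -/
def s2 : ℕ → ℕ
  | 0 => 0
  | (n+1) => s2 ((n+1)/2) + (n+1) % 2
decreasing_by exact Nat.div_lt_self (Nat.succ_pos n) one_lt_two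

lemma s2_zero : s2 0 = 0 := by simp [s2]

lemma s2_def {n : ℕ} (h : n ≠ 0) : s2 n = s2 (n/2) + n % 2 := by
  obtain ⟨m, rfl⟩ := Nat.exists_eq_succ_of_ne_zero h
  rw [s2]

lemma s2_one : s2 1 = 1 := by rw [s2_def one_ne_zero]; simp [s2_zero]

lemma s2_pos {n : ℕ} (h : 0 < n) : 0 < s2 n := by
  induction n using Nat.strong_induction_on with
  | _ n ih =>
    rw [s2_def h.ne']
    rcases Nat.eq_zero_or_pos (n % 2) with h2 | h2
    · have hd : 0 < n / 2 := Nat.div_pos (by omega) two_pos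
      have := ih (n/2) (Nat.div_lt_self h one_lt_two) hd
      omega
    · omega

lemma s2_add_pow {a c : ℕ} (h : a < 2^c) : s2 (a + 2^c) = s2 a + 1 := by
  induction c generalizing a with
  | zero =>
    interval_cases a
    norm_num [s2_def one_ne_zero, s2_zero]
  | succ c ih =>
    have hne : a + 2^(c+1) ≠ 0 := by positivity
    rw [s2_def hne]
    have h1 : (a + 2^(c+1)) / 2 = a/2 + 2^c := by omega
    have h2 : (a + 2^(c+1)) % 2 = a % 2 := by omega
    rw [h1, h2, ih (by omega)]
    rcases Nat.eq_zero_or_pos a with rfl | ha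
    · simp [s2_zero]
    · rw [s2_def ha.ne']; omega

lemma s2_pow {c : ℕ} : s2 (2^c) = 1 := by
  have := s2_add_pow (a := 0) (c := c) (by positivity)
  simpa [s2_zero] using this
/-- numerator used in the distance formula -/
def rho (k m : ℕ) : ℕ := if 2*k ≤ 2^m then k else 2^(Nat.size (2^m - k)) - (2^m - k)

/-- the distance formula for `k/2^m` with `k` odd -/
def phiKM (k m : ℕ) : ℕ := m + s2 (rho k m) - 2

open Classical in
/-- the distance from `1/2` in the Schreier graph, as a function of a real number -/
noncomputable def phi (x : ℝ) : ℕ :=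
  if h : ∃ p : ℕ × ℕ, Odd p.1 ∧ x = (p.1 : ℝ) / 2 ^ p.2 then phiKM h.choose.1 h.choose.2 else 0

lemma cancel_pow {a b d e : ℕ} (h : a * 2 ^ (e + d) = b * 2 ^ e) : a * 2 ^ d = b := by
  have hp : 0 < 2 ^ e := pow_pos (by norm_num : (0:ℕ) < 2) e
  apply Nat.eq_of_mul_eq_mul_left hp
  calc 2 ^ e * (a * 2 ^ d) = a * 2 ^ (e + d) := by ring
    _ = b * 2 ^ e := h
    _ = 2 ^ e * b := by ring

lemma rep_unique {k m k' m' : ℕ} (hk : Odd k) (hk' : Odd k')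
    (h : (k : ℝ) / 2 ^ m = (k' : ℝ) / 2 ^ m') : k = k' ∧ m = m' := by
  have h2m : (2:ℝ) ^ m ≠ 0 := by positivity
  have h2m' : (2:ℝ) ^ m' ≠ 0 := by positivity
  rw [div_eq_div_iff h2m h2m'] at h
  have hnat : k * 2 ^ m' = k' * 2 ^ m := by exact_mod_cast h
  have hmm : m = m' := by
    by_contra hne
    rcases Nat.lt_or_ge m m' with hlt | hge
    · have hrw : m' = m + (m' - m - 1 + 1) := by omega
      rw [hrw] at hnat
      have h2 := cancel_pow hnat
      rw [← h2] at hk'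
      exact (Nat.not_odd_iff_even.mpr ⟨k * 2 ^ (m' - m - 1), by ring⟩) hk'
    · have hlt : m' < m := by omega
      have hrw : m = m' + (m - m' - 1 + 1) := by omega
      rw [hrw] at hnat
      have h2 := cancel_pow hnat.symm
      rw [← h2] at hk
      exact (Nat.not_odd_iff_even.mpr ⟨k' * 2 ^ (m - m' - 1), by ring⟩) hk
  subst hmm
  exact ⟨Nat.eq_of_mul_eq_mul_right (pow_pos (by norm_num : (0:ℕ) < 2) m) hnat, rfl⟩

lemma phi_eq {x : ℝ} {k m : ℕ} (hk : Odd k) (hx : x = (k : ℝ) / 2 ^ m) :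
    phi x = phiKM k m := by
  have hex : ∃ p : ℕ × ℕ, Odd p.1 ∧ x = (p.1 : ℝ) / 2 ^ p.2 := ⟨(k, m), hk, hx⟩
  rw [phi, dif_pos hex]
  obtain ⟨h1, h2⟩ := hex.choose_spec
  have heq : (hex.choose.1 : ℝ) / 2 ^ hex.choose.2 = (k : ℝ) / 2 ^ m := by
    rw [← h2, hx]
  obtain ⟨hk', hm'⟩ := rep_unique h1 hk heq
  rw [hk', hm']
/-- canonical representation of a dyadic rational -/
structure DyRep (x : ℝ) (k m : ℕ) : Prop where
  odd : Odd k
  pos : 0 < k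
  lt : k < 2 ^ m
  eq : x = (k : ℝ) / 2 ^ m

lemma frac_lt_frac {k m a b : ℕ} : (k:ℝ)/2^m < (a:ℝ)/2^b ↔ k * 2^b < a * 2^m := by
  rw [div_lt_div_iff₀ (by positivity) (by positivity)]
  constructor <;> intro h <;> exact_mod_cast h

lemma frac_le_frac {k m a b : ℕ} : (k:ℝ)/2^m ≤ (a:ℝ)/2^b ↔ k * 2^b ≤ a * 2^m := by
  rw [div_le_div_iff₀ (by positivity) (by positivity)]
  constructor <;> intro h <;> exact_mod_cast h

lemma frac_pos {k m : ℕ} (h : 0 < k) : (0:ℝ) < (k:ℝ)/2^m := by positivity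

namespace DyRep

variable {x : ℝ} {k m : ℕ}

lemma m_pos (h : DyRep x k m) : 0 < m := by
  rcases Nat.eq_zero_or_pos m with rfl | h'
  · have := h.lt; have := h.pos; omega
  · exact h'

lemma x_pos (h : DyRep x k m) : 0 < x := h.eq ▸ frac_pos h.pos

lemma x_lt_one (h : DyRep x k m) : x < 1 := by
  rw [h.eq, div_lt_one (by positivity)]
  exact_mod_cast h.lt

lemma mem_dyadics (h : DyRep x k m) : x ∈ dyadics :=
  ⟨⟨k, m, h.pos, h.m_pos, h.eq⟩, h.x_pos, h.x_lt_one⟩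

lemma lt_half_iff (h : DyRep x k m) : x < 1/2 ↔ 2*k < 2^m := by
  have : (1:ℝ)/2 = ((1:ℕ):ℝ)/2^(1:ℕ) := by norm_num
  rw [h.eq, this, frac_lt_frac]; omega

lemma le_half_iff (h : DyRep x k m) : x ≤ 1/2 ↔ 2*k ≤ 2^m := by
  have : (1:ℝ)/2 = ((1:ℕ):ℝ)/2^(1:ℕ) := by norm_num
  rw [h.eq, this, frac_le_frac]; omega

lemma lt_34_iff (h : DyRep x k m) : x < 3/4 ↔ 4*k < 3*2^m := by
  have : (3:ℝ)/4 = ((3:ℕ):ℝ)/2^(2:ℕ) := by norm_num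
  rw [h.eq, this, frac_lt_frac]; omega

lemma le_34_iff (h : DyRep x k m) : x ≤ 3/4 ↔ 4*k ≤ 3*2^m := by
  have : (3:ℝ)/4 = ((3:ℕ):ℝ)/2^(2:ℕ) := by norm_num
  rw [h.eq, this, frac_le_frac]; omega

lemma lt_78_iff (h : DyRep x k m) : x < 7/8 ↔ 8*k < 7*2^m := by
  have : (7:ℝ)/8 = ((7:ℕ):ℝ)/2^(3:ℕ) := by norm_num
  rw [h.eq, this, frac_lt_frac]; omega

lemma le_78_iff (h : DyRep x k m) : x ≤ 7/8 ↔ 8*k ≤ 7*2^m := by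
  have : (7:ℝ)/8 = ((7:ℕ):ℝ)/2^(3:ℕ) := by norm_num
  rw [h.eq, this, frac_le_frac]; omega

lemma lt_14_iff (h : DyRep x k m) : x < 1/4 ↔ 4*k < 2^m := by
  have : (1:ℝ)/4 = ((1:ℕ):ℝ)/2^(2:ℕ) := by norm_num
  rw [h.eq, this, frac_lt_frac]; omega

lemma le_14_iff (h : DyRep x k m) : x ≤ 1/4 ↔ 4*k ≤ 2^m := by
  have : (1:ℝ)/4 = ((1:ℕ):ℝ)/2^(2:ℕ) := by norm_num
  rw [h.eq, this, frac_le_frac]; omega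

lemma le_58_iff (h : DyRep x k m) : x ≤ 5/8 ↔ 8*k ≤ 5*2^m := by
  have : (5:ℝ)/8 = ((5:ℕ):ℝ)/2^(3:ℕ) := by norm_num
  rw [h.eq, this, frac_le_frac]; omega

end DyRep

lemma rep_half : DyRep (1/2 : ℝ) 1 1 := ⟨odd_one, one_pos, by norm_num, by norm_num⟩

lemma half_mem_dyadics : (1/2 : ℝ) ∈ dyadics := rep_half.mem_dyadics

/-- every dyadic rational in `(0,1)` has a canonical representation -/
lemma dy_rep {x : ℝ} (hx : x ∈ dyadics) : ∃ k m, DyRep x k m := by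
  obtain ⟨⟨k, m, hk, -, hxe⟩, hx0, hx1⟩ := hx
  induction k using Nat.strong_induction_on generalizing m with
  | _ k ih =>
    have hklt : k < 2 ^ m := by
      by_contra hge
      have : (1:ℝ) ≤ (k:ℝ)/2^m := by
        rw [le_div_iff₀ (by positivity)]
        have : (2:ℝ)^m ≤ (k:ℝ) := by exact_mod_cast Nat.le_of_not_lt hge
        linarith
      rw [← hxe] at this; linarith
    rcases Nat.even_or_odd k with ⟨j, hj⟩ | hodd
    · have hm0 : m ≠ 0 := by
        rintro rfl
        simp only [pow_zero] at hklt; omega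
      obtain ⟨m', rfl⟩ := Nat.exists_eq_succ_of_ne_zero hm0
      have hj0 : 0 < j := by omega
      have hxe' : x = (j:ℝ)/2^m' := by
        rw [hxe, hj]
        have : (2:ℝ)^(m'+1) = 2 * 2^m' := by ring
        rw [this]
        push_cast
        field_simp
        ring
      exact ih j (by omega) m' hj0 hxe'
    · exact ⟨k, m, hodd, hk, hklt, hxe⟩

lemma phi_half : phi (1/2 : ℝ) = 0 := by
  rw [phi_eq odd_one rep_half.eq, phiKM, rho]
  norm_num [s2_one]

lemma rho_pos {k m : ℕ} (hk : 0 < k) (hlt : k < 2^m) : 0 < rho k m := by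
  rw [rho]
  split
  · exact hk
  · have h1 : 2^m - k < 2^((2^m - k).size) := Nat.lt_size_self _
    omega

lemma DyRep.phi_zero_imp (h : DyRep x k m) (h0 : phi x = 0) : x = 1/2 := by
  rw [phi_eq h.odd h.eq, phiKM] at h0
  have hs : 0 < s2 (rho k m) := s2_pos (rho_pos h.pos h.lt)
  have hm : m = 1 := by
    have := h.m_pos; omega
  subst hm
  have : k = 1 := by have := h.lt; have := h.pos; omega
  subst this
  rw [h.eq]; norm_num
lemma Amap_low {x : ℝ} (hx : x ≤ 1/2) : Amap x = x/2 := if_pos hx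
lemma Amap_mid {x : ℝ} (h1 : ¬ x ≤ 1/2) (h2 : x ≤ 3/4) : Amap x = x - 1/4 := by
  rw [Amap, if_neg h1, if_pos h2]
lemma Amap_high {x : ℝ} (h2 : ¬ x ≤ 3/4) : Amap x = 2*x - 1 := by
  rw [Amap, if_neg (by intro h; exact h2 (by linarith)), if_neg h2]
lemma Bmap_low {x : ℝ} (hx : x ≤ 1/2) : Bmap x = x := if_pos hx
lemma Bmap_mid {x : ℝ} (h1 : ¬ x ≤ 1/2) (h2 : x ≤ 3/4) : Bmap x = x/2 + 1/4 := by
  rw [Bmap, if_neg h1, if_pos h2]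
lemma Bmap_high {x : ℝ} (h2 : ¬ x ≤ 3/4) (h3 : x ≤ 7/8) : Bmap x = x - 1/8 := by
  rw [Bmap, if_neg (by intro h; exact h2 (by linarith)), if_neg h2, if_pos h3]
lemma Bmap_top {x : ℝ} (h3 : ¬ x ≤ 7/8) : Bmap x = 2*x - 1 := by
  rw [Bmap, if_neg (by intro h; exact h3 (by linarith)), if_neg (by intro h; exact h3 (by linarith)),
    if_neg h3]
lemma Ainvmap_low {x : ℝ} (hx : x ≤ 1/4) : Ainvmap x = 2*x := if_pos hx
lemma Ainvmap_mid {x : ℝ} (h1 : ¬ x ≤ 1/4) (h2 : x ≤ 1/2) : Ainvmap x = x + 1/4 := by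
  rw [Ainvmap, if_neg h1, if_pos h2]
lemma Ainvmap_high {x : ℝ} (h2 : ¬ x ≤ 1/2) : Ainvmap x = (x + 1)/2 := by
  rw [Ainvmap, if_neg (by intro h; exact h2 (by linarith)), if_neg h2]
lemma Binvmap_low {x : ℝ} (hx : x ≤ 1/2) : Binvmap x = x := if_pos hx
lemma Binvmap_mid {x : ℝ} (h1 : ¬ x ≤ 1/2) (h2 : x ≤ 5/8) : Binvmap x = 2*x - 1/2 := by
  rw [Binvmap, if_neg h1, if_pos h2]
lemma Binvmap_high {x : ℝ} (h2 : ¬ x ≤ 5/8) (h3 : x ≤ 3/4) : Binvmap x = x + 1/8 := by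
  rw [Binvmap, if_neg (by intro h; exact h2 (by linarith)), if_neg h2, if_pos h3]
lemma Binvmap_top {x : ℝ} (h3 : ¬ x ≤ 3/4) : Binvmap x = (x + 1)/2 := by
  rw [Binvmap, if_neg (by intro h; exact h3 (by linarith)),
    if_neg (by intro h; exact h3 (by linarith)), if_neg h3]

lemma size_sandwich {j b : ℕ} (h1 : 2^b ≤ j) (h2 : j < 2^(b+1)) : j.size = b + 1 :=
  le_antisymm (Nat.size_le.2 h2) (Nat.lt_size.2 h1)

lemma phiKM_left {k m : ℕ} (h : 2*k ≤ 2^m) : phiKM k m = m + s2 k - 2 := by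
  rw [phiKM, rho, if_pos h]

lemma phiKM_right {k m b : ℕ} (h : 2^m < 2*k) (h1 : 2^b ≤ 2^m - k) (h2 : 2^m - k < 2^(b+1)) :
    phiKM k m = m + s2 (2^(b+1) - (2^m - k)) - 2 := by
  rw [phiKM, rho, if_neg (by omega), size_sandwich h1 h2]

/-- Region `(0, 1/2)`. -/
lemma regionL {x : ℝ} {k m : ℕ} (h : DyRep x k m) (hr : 2*k < 2^m) :
    Amap x ∈ dyadics ∧ phi (Amap x) = phi x + 1 ∧ Amap x < 1/2 ∧
    Ainvmap x ∈ dyadics ∧ phi (Ainvmap x) + 1 = phi x ∧ Amap (Ainvmap x) = x ∧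
    Bmap x = x ∧ Binvmap x = x := by
  obtain ⟨t, ht⟩ := h.odd
  have hm2 : 2 ≤ m := by
    by_contra hm
    interval_cases m <;> omega
  have hxhalf : x < 1/2 := h.lt_half_iff.2 hr
  have hphix : phi x = m + s2 k - 2 := by
    rw [phi_eq h.odd h.eq, phiKM_left (by omega)]
  have hs2k : 0 < s2 k := s2_pos h.pos
  have hA : Amap x = (k:ℝ)/2^(m+1) := by
    rw [Amap_low (le_of_lt hxhalf), h.eq, pow_succ]; ring
  have hArep : DyRep (Amap x) k (m+1) := ⟨h.odd, h.pos, by have := h.lt; have := Nat.pow_le_pow_right (show 1 ≤ 2 by norm_num) (show m ≤ m+1 by omega); omega, hA⟩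
  have hAphi : phi (Amap x) = phi x + 1 := by
    rw [phi_eq h.odd hA, phiKM_left (by have : (2:ℕ)^m ≤ 2^(m+1) := Nat.pow_le_pow_right (by norm_num) (by omega); omega), hphix]
    omega
  refine ⟨hArep.mem_dyadics, hAphi, hArep.lt_half_iff.2 (by rw [pow_succ]; omega), ?_⟩
  by_cases h14 : x ≤ 1/4
  · -- `Ainvmap x = 2x = k/2^(m-1)`
    have h4k : 4*k ≤ 2^m := (h.le_14_iff).1 h14
    obtain ⟨m', rfl⟩ : ∃ m', m = m' + 2 := ⟨m - 2, by omega⟩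
    have hAi : Ainvmap x = (k:ℝ)/2^(m'+1) := by
      rw [Ainvmap_low h14, h.eq, pow_succ]; ring
    have hrep : DyRep (Ainvmap x) k (m'+1) := by
      refine ⟨h.odd, h.pos, ?_, hAi⟩
      have e1 : (2:ℕ)^(m'+2) = 2*2^(m'+1) := by ring
      omega
    have hphiAi : phi (Ainvmap x) = (m'+1) + s2 k - 2 := by
      rw [phi_eq h.odd hAi, phiKM_left ?_]
      have e1 : (2:ℕ)^(m'+2) = 2*2^(m'+1) := by ring
      omega
    refine ⟨hrep.mem_dyadics, by rw [hphiAi, hphix]; omega, ?_, Bmap_low (by linarith), Binvmap_low (by linarith)⟩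
    have : Ainvmap x ≤ 1/2 := hrep.le_half_iff.2 (by
      have e1 : (2:ℕ)^(m'+2) = 2*2^(m'+1) := by ring
      omega)
    rw [Amap_low this, hAi, h.eq, pow_succ]
    ring
  · -- `Ainvmap x = x + 1/4 ∈ (1/2, 3/4)`
    have h4k : 2^m < 4*k := by
      have h' : ¬ 4*k ≤ 2^m := fun hh => h14 (h.le_14_iff.2 hh)
      omega
    have hm3 : 3 ≤ m := by
      by_contra hm
      interval_cases m <;> omega
    obtain ⟨m', rfl⟩ : ∃ m', m = m' + 3 := ⟨m - 3, by omega⟩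
    have e1 : (2:ℕ)^(m'+3) = 8*2^m' := by ring
    have e2 : (2:ℕ)^(m'+2) = 4*2^m' := by ring
    have e3 : (2:ℕ)^(m'+1) = 2*2^m' := by ring
    have hAi : Ainvmap x = ((k + 2^(m'+1) : ℕ):ℝ)/2^(m'+3) := by
      rw [Ainvmap_mid h14 (by linarith), h.eq]
      push_cast
      field_simp
      ring
    have hrep : DyRep (Ainvmap x) (k + 2^(m'+1)) (m'+3) :=
      ⟨⟨t + 2^m', by rw [e3]; omega⟩, by omega, by omega, hAi⟩
    have e4 : (2:ℕ)^(m'+1+1) = 4*2^m' := by ring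
    have hphiAi : phi (Ainvmap x) = (m'+3) + s2 (k - 2^(m'+1)) - 2 := by
      have harg : 2^(m'+1+1) - (2^(m'+3) - (k + 2^(m'+1))) = k - 2^(m'+1) := by omega
      rw [phi_eq hrep.odd hAi, phiKM_right (b := m'+1) (by omega) (by omega) (by omega), harg]
    have hs2 : s2 k = s2 (k - 2^(m'+1)) + 1 := by
      have hh : k = (k - 2^(m'+1)) + 2^(m'+1) := by omega
      conv_lhs => rw [hh]
      rw [s2_add_pow (by omega)]
    refine ⟨hrep.mem_dyadics, by rw [hphiAi, hphix, hs2]; omega, ?_, Bmap_low (by linarith), Binvmap_low (by linarith)⟩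
    have hAiv : Ainvmap x = x + 1/4 := Ainvmap_mid h14 (by linarith)
    rw [hAiv, Amap_mid (by rw [not_le] at h14 ⊢; linarith) (by linarith)]
    ring
/-- The basepoint `1/2`. -/
lemma regionRoot :
    Amap (1/2 : ℝ) ∈ dyadics ∧ phi (Amap (1/2:ℝ)) = 1 ∧ Amap (1/2:ℝ) < 1/2 ∧
    Ainvmap (1/2:ℝ) ∈ dyadics ∧ phi (Ainvmap (1/2:ℝ)) = 1 ∧ 3/4 ≤ Ainvmap (1/2:ℝ) ∧
    Ainvmap (1/2:ℝ) < 7/8 ∧ Amap (Ainvmap (1/2:ℝ)) = 1/2 ∧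
    Bmap (1/2:ℝ) = 1/2 ∧ Binvmap (1/2:ℝ) = 1/2 := by
  have hA : Amap (1/2:ℝ) = 1/4 := by rw [Amap_low (by norm_num)]; norm_num
  have hAi : Ainvmap (1/2:ℝ) = 3/4 := by rw [Ainvmap_mid (by norm_num) (by norm_num)]; norm_num
  have h14 : DyRep (1/4 : ℝ) 1 2 := ⟨odd_one, one_pos, by norm_num, by norm_num⟩
  have h34 : DyRep (3/4 : ℝ) 3 2 := ⟨⟨1, by norm_num⟩, by norm_num, by norm_num, by norm_num⟩
  refine ⟨hA ▸ h14.mem_dyadics, ?_, by rw [hA]; norm_num, hAi ▸ h34.mem_dyadics, ?_, by rw [hAi],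
    by rw [hAi]; norm_num, ?_, Bmap_low (by norm_num), Binvmap_low (by norm_num)⟩
  · rw [hA, phi_eq odd_one h14.eq, phiKM_left (by norm_num)]
    norm_num [s2_one]
  · rw [hAi, phi_eq h34.odd h34.eq, phiKM_right (b := 0) (by norm_num) (by norm_num) (by norm_num)]
    norm_num [s2_one]
  · rw [hAi, Amap_mid (by norm_num) (by norm_num)]
    norm_num

/-- Region `(1/2, 3/4)`. -/
lemma regionM2 {x : ℝ} {k m : ℕ} (h : DyRep x k m) (h1 : 2^m < 2*k) (h2 : 4*k < 3*2^m) :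
    Amap x ∈ dyadics ∧ phi (Amap x) = phi x + 1 ∧ Amap x < 1/2 ∧
    Bmap x ∈ dyadics ∧ phi (Bmap x) = phi x + 1 ∧ 1/2 < Bmap x ∧ Bmap x < 3/4 ∧
    Ainvmap x ∈ dyadics ∧ phi (Ainvmap x) = phi x + 1 ∧ 3/4 ≤ Ainvmap x ∧ Ainvmap x < 7/8 ∧
    Amap (Ainvmap x) = x ∧
    Binvmap x ∈ dyadics ∧ phi (Binvmap x) + 1 = phi x ∧ Bmap (Binvmap x) = x := by
  obtain ⟨t, ht⟩ := h.odd
  have hm3 : 3 ≤ m := by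
    by_contra hm
    interval_cases m <;> omega
  obtain ⟨m', rfl⟩ : ∃ m', m = m' + 3 := ⟨m - 3, by omega⟩
  have e1 : (2:ℕ)^(m'+3) = 8*2^m' := by ring
  have e2 : (2:ℕ)^(m'+2) = 4*2^m' := by ring
  have e3 : (2:ℕ)^(m'+1) = 2*2^m' := by ring
  have e4 : (2:ℕ)^(m'+1+1) = 4*2^m' := by ring
  have e5 : (2:ℕ)^(m'+4) = 16*2^m' := by ring
  have e6 : (2:ℕ)^(m'+2+1) = 8*2^m' := by ring
  have e7 : (2:ℕ)^(m'+0+1) = 2*2^m' := by ring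
  have e8 : (2:ℕ)^(m'+0) = 2^m' := by ring
  have hP : 0 < (2:ℕ)^m' := pow_pos (by norm_num : (0:ℕ) < 2) m'
  -- position of x
  have hxgt : ¬ x ≤ 1/2 := fun hh => by have := h.le_half_iff.1 hh; omega
  have hxlt34 : x < 3/4 := h.lt_34_iff.2 (by omega)
  -- phi x
  have hphix : phi x = (m'+3) + s2 (k - 2^(m'+2)) - 2 := by
    have harg : 2^(m'+1+1) - (2^(m'+3) - k) = k - 2^(m'+2) := by omega
    rw [phi_eq h.odd h.eq, phiKM_right (b := m'+1) (by omega) (by omega) (by omega), harg]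
  have hs : 0 < s2 (k - 2^(m'+2)) := s2_pos (by omega)
  -- A
  have hcast : ((k - 2^(m'+1) : ℕ):ℝ) = (k:ℝ) - 2^(m'+1) := by
    push_cast [Nat.cast_sub (show 2^(m'+1) ≤ k by omega)]; ring
  have hA : Amap x = ((k - 2^(m'+1) : ℕ):ℝ)/2^(m'+3) := by
    rw [Amap_mid hxgt (le_of_lt hxlt34), h.eq, hcast]
    push_cast
    field_simp
    ring
  have hArep : DyRep (Amap x) (k - 2^(m'+1)) (m'+3) := ⟨⟨t - 2^m', by omega⟩, by omega, by omega, hA⟩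
  have hAphi : phi (Amap x) = phi x + 1 := by
    rw [phi_eq hArep.odd hA, phiKM_left (by omega), hphix]
    have hh : k - 2^(m'+1) = (k - 2^(m'+2)) + 2^(m'+1) := by omega
    rw [hh, s2_add_pow (by omega)]
    omega
  -- B
  have hcastB : ((k + 2^(m'+2) : ℕ):ℝ) = (k:ℝ) + 2^(m'+2) := by push_cast; ring
  have hB : Bmap x = ((k + 2^(m'+2) : ℕ):ℝ)/2^(m'+4) := by
    rw [Bmap_mid hxgt (le_of_lt hxlt34), h.eq, hcastB]
    field_simp
    ring
  have hBrep : DyRep (Bmap x) (k + 2^(m'+2)) (m'+4) := ⟨⟨t + 2^(m'+1), by omega⟩, by omega, by omega, hB⟩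
  have hBphi : phi (Bmap x) = phi x + 1 := by
    have harg : 2^(m'+2+1) - (2^(m'+4) - (k + 2^(m'+2))) = k - 2^(m'+2) := by omega
    rw [phi_eq hBrep.odd hB, phiKM_right (b := m'+2) (by omega) (by omega) (by omega), harg, hphix]
    omega
  -- Ainv
  have hcastAi : ((k + 2^(m'+3) : ℕ):ℝ) = (k:ℝ) + 2^(m'+3) := by push_cast; ring
  have hAi : Ainvmap x = ((k + 2^(m'+3) : ℕ):ℝ)/2^(m'+4) := by
    rw [Ainvmap_high hxgt, h.eq, hcastAi, div_add' _ _ _ (by positivity), div_div, ← pow_succ]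
    norm_num
  have hAirep : DyRep (Ainvmap x) (k + 2^(m'+3)) (m'+4) := ⟨⟨t + 2^(m'+2), by omega⟩, by omega, by omega, hAi⟩
  have hAiphi : phi (Ainvmap x) = phi x + 1 := by
    have harg : 2^(m'+1+1) - (2^(m'+4) - (k + 2^(m'+3))) = k - 2^(m'+2) := by omega
    rw [phi_eq hAirep.odd hAi, phiKM_right (b := m'+1) (by omega) (by omega) (by omega), harg, hphix]
    omega
  have hAmapAi : Amap (Ainvmap x) = x := by
    rw [Ainvmap_high hxgt, Amap_high (by rw [not_le] at hxgt ⊢; linarith)]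
    ring
  refine ⟨hArep.mem_dyadics, hAphi, hArep.lt_half_iff.2 (by omega),
    hBrep.mem_dyadics, hBphi, ?_, hBrep.lt_34_iff.2 (by omega),
    hAirep.mem_dyadics, hAiphi, ?_, hAirep.lt_78_iff.2 (by omega), hAmapAi, ?_⟩
  · rw [lt_iff_not_ge]
    exact fun hh => by have := hBrep.le_half_iff.1 hh; omega
  · rw [← not_lt]
    exact fun hh => by have := hAirep.lt_34_iff.1 hh; omega
  -- Binv
  by_cases h58 : x ≤ 5/8
  · have h58n : 8*k ≤ 5*2^(m'+3) := h.le_58_iff.1 h58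
    have hcastBi : ((k - 2^(m'+1) : ℕ):ℝ) = (k:ℝ) - 2^(m'+1) := hcast
    have hBi : Binvmap x = ((k - 2^(m'+1) : ℕ):ℝ)/2^(m'+2) := by
      rw [Binvmap_mid hxgt h58, h.eq, hcastBi]
      field_simp
      ring
    have hBirep : DyRep (Binvmap x) (k - 2^(m'+1)) (m'+2) := ⟨⟨t - 2^m', by omega⟩, by omega, by omega, hBi⟩
    have hBiphi : phi (Binvmap x) + 1 = phi x := by
      have harg : 2^(m'+0+1) - (2^(m'+2) - (k - 2^(m'+1))) = k - 2^(m'+2) := by omega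
      rw [phi_eq hBirep.odd hBi, phiKM_right (b := m') (by omega) (by omega) (by omega), harg, hphix]
      omega
    have hBmapBi : Bmap (Binvmap x) = x := by
      rw [Binvmap_mid hxgt h58, Bmap_mid (by rw [not_le] at hxgt ⊢; linarith) (by linarith)]
      ring
    exact ⟨hBirep.mem_dyadics, hBiphi, hBmapBi⟩
  · have h58n : 5*2^(m'+3) < 8*k := by
      have hlem : ¬ (8*k ≤ 5*2^(m'+3)) := fun hh => h58 (h.le_58_iff.2 hh)
      omega
    have hm'1 : 1 ≤ m' := by
      by_contra hm
      have : m' = 0 := by omega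
      subst this
      omega
    obtain ⟨n, rfl⟩ : ∃ n, m' = n + 1 := ⟨m' - 1, by omega⟩
    have f1 : (2:ℕ)^(n+1) = 2*2^n := by ring
    have f2 : (2:ℕ)^(n+4) = 16*2^n := by ring
    have f3 : (2:ℕ)^(n+1+2) = 8*2^n := by ring
    have f4 : (2:ℕ)^(n+1+1) = 4*2^n := by ring
    have hcastBi : ((k + 2^(n+1) : ℕ):ℝ) = (k:ℝ) + 2^(n+1) := by push_cast; ring
    have hBi : Binvmap x = ((k + 2^(n+1) : ℕ):ℝ)/2^(n+4) := by
      rw [Binvmap_high h58 (le_of_lt hxlt34), h.eq, hcastBi]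
      field_simp
      ring
    have hBirep : DyRep (Binvmap x) (k + 2^(n+1)) (n+4) := ⟨⟨t + 2^n, by omega⟩, by omega, by omega, hBi⟩
    have hBiphi : phi (Binvmap x) + 1 = phi x := by
      have harg : 2^(n+1+1) - (2^(n+4) - (k + 2^(n+1))) = k - 5*2^(n+1) := by omega
      rw [phi_eq hBirep.odd hBi, phiKM_right (b := n+1) (by omega) (by omega) (by omega), harg, hphix]
      have hh : k - 2^(n+1+2) = (k - 5*2^(n+1)) + 2^(n+1) := by omega
      rw [hh, s2_add_pow (by omega)]
      omega
    have hBmapBi : Bmap (Binvmap x) = x := by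
      rw [Binvmap_high h58 (le_of_lt hxlt34), Bmap_high (by rw [not_le] at h58 ⊢; linarith) (by linarith)]
      ring
    exact ⟨hBirep.mem_dyadics, hBiphi, hBmapBi⟩
lemma phiKM_right' {k m : ℕ} (h : 2^m < 2*k) :
    phiKM k m = m + s2 (2^((2^m - k).size) - (2^m - k)) - 2 := by
  rw [phiKM, rho, if_neg (by omega)]

/-- Region `[3/4, 7/8)`. -/
lemma regionM1 {x : ℝ} {k m : ℕ} (h : DyRep x k m) (h1 : 3*2^m ≤ 4*k) (h2 : 8*k < 7*2^m) :
    Amap x ∈ dyadics ∧ phi (Amap x) + 1 = phi x ∧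
    Bmap x ∈ dyadics ∧ phi (Bmap x) = phi x + 1 ∧ 1/2 < Bmap x ∧ Bmap x < 3/4 ∧
    Ainvmap x ∈ dyadics ∧ phi (Ainvmap x) = phi x + 1 ∧ 7/8 ≤ Ainvmap x ∧
    Amap (Ainvmap x) = x ∧ Binvmap x = Ainvmap x := by
  obtain ⟨t, ht⟩ := h.odd
  by_cases hm : m ≤ 3
  · -- forced `x = 3/4`
    have hk3 : k = 3 ∧ m = 2 := by
      interval_cases m <;> omega
    obtain ⟨rfl, rfl⟩ := hk3
    have hx34 : x = 3/4 := by rw [h.eq]; norm_num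
    subst hx34
    have hphix : phi ((3:ℝ)/4) = 1 := by
      rw [phi_eq h.odd h.eq, phiKM_right (b := 0) (by norm_num) (by norm_num) (by norm_num)]
      norm_num [s2_one]
    have hA : Amap ((3:ℝ)/4) = 1/2 := by
      rw [Amap_mid (by norm_num) (by norm_num)]; norm_num
    have hB : Bmap ((3:ℝ)/4) = 5/8 := by
      rw [Bmap_mid (by norm_num) (by norm_num)]; norm_num
    have hAi : Ainvmap ((3:ℝ)/4) = 7/8 := by
      rw [Ainvmap_high (by norm_num)]; norm_num
    have h58 : DyRep ((5:ℝ)/8) 5 3 := ⟨⟨2, by norm_num⟩, by norm_num, by norm_num, by norm_num⟩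
    have h78 : DyRep ((7:ℝ)/8) 7 3 := ⟨⟨3, by norm_num⟩, by norm_num, by norm_num, by norm_num⟩
    refine ⟨hA ▸ half_mem_dyadics, ?_, hB ▸ h58.mem_dyadics, ?_, by rw [hB]; norm_num,
      by rw [hB]; norm_num, hAi ▸ h78.mem_dyadics, ?_, by rw [hAi], ?_, ?_⟩
    · rw [hA, phi_half, hphix]
    · rw [hB, hphix, phi_eq h58.odd h58.eq,
        phiKM_right (b := 1) (by norm_num) (by norm_num) (by norm_num)]
      norm_num [s2_one]
    · rw [hAi, hphix, phi_eq h78.odd h78.eq,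
        phiKM_right (b := 0) (by norm_num) (by norm_num) (by norm_num)]
      norm_num [s2_one]
    · rw [hAi, Amap_high (by norm_num)]; norm_num
    · rw [hAi, Binvmap_high (by norm_num) (by norm_num)]; norm_num
  · -- main case: `m ≥ 4`, `3·2^m < 4k`
    have hm4 : 4 ≤ m := by
      rcases Nat.lt_or_ge m 4 with hlt | hge
      · interval_cases m <;> omega
      · exact hge
    obtain ⟨m', rfl⟩ : ∃ m', m = m' + 4 := ⟨m - 4, by omega⟩
    have e1 : (2:ℕ)^(m'+4) = 16*2^m' := by ring
    have e2 : (2:ℕ)^(m'+3) = 8*2^m' := by ring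
    have e3 : (2:ℕ)^(m'+2) = 4*2^m' := by ring
    have e4 : (2:ℕ)^(m'+1) = 2*2^m' := by ring
    have e5 : (2:ℕ)^(m'+5) = 32*2^m' := by ring
    have e6 : (2:ℕ)^(m'+1+1) = 4*2^m' := by ring
    have e7 : (2:ℕ)^(m'+2+1) = 8*2^m' := by ring
    have hP : 0 < (2:ℕ)^m' := pow_pos (by norm_num : (0:ℕ) < 2) m'
    have h1s : 3*2^(m'+4) < 4*k := by omega
    -- positions
    have hx34 : ¬ x ≤ 3/4 := fun hh => by have := h.le_34_iff.1 hh; omega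
    have hx12 : ¬ x ≤ 1/2 := fun hh => by rw [not_le] at hx34; linarith
    have hx78 : x < 7/8 := h.lt_78_iff.2 (by omega)
    -- phi x
    have hphix : phi x = (m'+4) + s2 (k - 3*2^(m'+2)) - 2 := by
      have harg : 2^(m'+1+1) - (2^(m'+4) - k) = k - 3*2^(m'+2) := by omega
      rw [phi_eq h.odd h.eq, phiKM_right (b := m'+1) (by omega) (by omega) (by omega), harg]
    have hs : 0 < s2 (k - 3*2^(m'+2)) := s2_pos (by omega)
    -- A
    have hcastA : ((k - 2^(m'+3) : ℕ):ℝ) = (k:ℝ) - 2^(m'+3) := by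
      push_cast [Nat.cast_sub (show 2^(m'+3) ≤ k by omega)]; ring
    have hA : Amap x = ((k - 2^(m'+3) : ℕ):ℝ)/2^(m'+3) := by
      rw [Amap_high hx34, h.eq, hcastA]
      field_simp
      ring
    have hArep : DyRep (Amap x) (k - 2^(m'+3)) (m'+3) :=
      ⟨⟨t - 2^(m'+2), by omega⟩, by omega, by omega, hA⟩
    have hAphi : phi (Amap x) + 1 = phi x := by
      have harg : 2^(m'+1+1) - (2^(m'+3) - (k - 2^(m'+3))) = k - 3*2^(m'+2) := by omega
      rw [phi_eq hArep.odd hA, phiKM_right (b := m'+1) (by omega) (by omega) (by omega), harg, hphix]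
      omega
    -- B
    have hcastB : ((k - 2^(m'+1) : ℕ):ℝ) = (k:ℝ) - 2^(m'+1) := by
      push_cast [Nat.cast_sub (show 2^(m'+1) ≤ k by omega)]; ring
    have hB : Bmap x = ((k - 2^(m'+1) : ℕ):ℝ)/2^(m'+4) := by
      rw [Bmap_high hx34 (le_of_lt hx78), h.eq, hcastB]
      field_simp
      ring
    have hBrep : DyRep (Bmap x) (k - 2^(m'+1)) (m'+4) :=
      ⟨⟨t - 2^m', by omega⟩, by omega, by omega, hB⟩
    have hBphi : phi (Bmap x) = phi x + 1 := by
      have harg : 2^(m'+2+1) - (2^(m'+4) - (k - 2^(m'+1))) = (k - 3*2^(m'+2)) + 2^(m'+1) := by omega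
      rw [phi_eq hBrep.odd hB, phiKM_right (b := m'+2) (by omega) (by omega) (by omega), harg,
        s2_add_pow (by omega), hphix]
      omega
    -- Ainv
    have hcastAi : ((k + 2^(m'+4) : ℕ):ℝ) = (k:ℝ) + 2^(m'+4) := by push_cast; ring
    have hAi : Ainvmap x = ((k + 2^(m'+4) : ℕ):ℝ)/2^(m'+5) := by
      rw [Ainvmap_high hx12, h.eq, hcastAi, div_add' _ _ _ (by positivity), div_div, ← pow_succ]
      norm_num
    have hAirep : DyRep (Ainvmap x) (k + 2^(m'+4)) (m'+5) :=
      ⟨⟨t + 2^(m'+3), by omega⟩, by omega, by omega, hAi⟩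
    have hAiphi : phi (Ainvmap x) = phi x + 1 := by
      have harg : 2^(m'+1+1) - (2^(m'+5) - (k + 2^(m'+4))) = k - 3*2^(m'+2) := by omega
      rw [phi_eq hAirep.odd hAi, phiKM_right (b := m'+1) (by omega) (by omega) (by omega), harg, hphix]
      omega
    have hAmapAi : Amap (Ainvmap x) = x := by
      rw [Ainvmap_high hx12, Amap_high (by rw [not_le] at hx12 ⊢; linarith)]
      ring
    refine ⟨hArep.mem_dyadics, hAphi, hBrep.mem_dyadics, hBphi, ?_, hBrep.lt_34_iff.2 (by omega),
      hAirep.mem_dyadics, hAiphi, ?_, hAmapAi, ?_⟩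
    · rw [lt_iff_not_ge]
      exact fun hh => by have := hBrep.le_half_iff.1 hh; omega
    · rw [← not_lt]
      exact fun hh => by have := hAirep.lt_78_iff.1 hh; omega
    · rw [Binvmap_top hx34, Ainvmap_high hx12]

/-- Region `[7/8, 1)`. -/
lemma regionT {x : ℝ} {k m : ℕ} (h : DyRep x k m) (h1 : 7*2^m ≤ 8*k) :
    Amap x ∈ dyadics ∧ phi (Amap x) + 1 = phi x ∧ Bmap x = Amap x ∧
    Ainvmap x ∈ dyadics ∧ phi (Ainvmap x) = phi x + 1 ∧ 7/8 ≤ Ainvmap x ∧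
    Amap (Ainvmap x) = x ∧ Binvmap x = Ainvmap x := by
  obtain ⟨t, ht⟩ := h.odd
  have hklt := h.lt
  have hkpos := h.pos
  have hm3 : 3 ≤ m := by
    by_contra hm
    rw [not_le] at hm
    interval_cases m <;> omega
  obtain ⟨m', rfl⟩ : ∃ m', m = m' + 3 := ⟨m - 3, by omega⟩
  have e1 : (2:ℕ)^(m'+3) = 8*2^m' := by ring
  have e2 : (2:ℕ)^(m'+2) = 4*2^m' := by ring
  have e3 : (2:ℕ)^(m'+1) = 2*2^m' := by ring
  have e4 : (2:ℕ)^(m'+4) = 16*2^m' := by ring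
  have hP : 0 < (2:ℕ)^m' := pow_pos (by norm_num : (0:ℕ) < 2) m'
  set j : ℕ := 2^(m'+3) - k with hj
  have hj1 : 1 ≤ j := by omega
  have hjP : j ≤ 2^m' := by omega
  have hjlt : j < 2^(j.size) := Nat.lt_size_self j
  have hspos : 0 < s2 (2^(j.size) - j) := s2_pos (by omega)
  -- positions
  have hx34 : ¬ x ≤ 3/4 := fun hh => by have := h.le_34_iff.1 hh; omega
  have hx12 : ¬ x ≤ 1/2 := fun hh => by rw [not_le] at hx34; linarith
  -- phi x
  have hphix : phi x = (m'+3) + s2 (2^(j.size) - j) - 2 := by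
    rw [phi_eq h.odd h.eq, phiKM_right' (by omega), ← hj]
  -- A
  have hcastA : ((k - 2^(m'+2) : ℕ):ℝ) = (k:ℝ) - 2^(m'+2) := by
    push_cast [Nat.cast_sub (show 2^(m'+2) ≤ k by omega)]; ring
  have hA : Amap x = ((k - 2^(m'+2) : ℕ):ℝ)/2^(m'+2) := by
    rw [Amap_high hx34, h.eq, hcastA]
    field_simp
    ring
  have hArep : DyRep (Amap x) (k - 2^(m'+2)) (m'+2) :=
    ⟨⟨t - 2^(m'+1), by omega⟩, by omega, by omega, hA⟩
  have hAphi : phi (Amap x) + 1 = phi x := by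
    have harg : 2^(m'+2) - (k - 2^(m'+2)) = j := by omega
    rw [phi_eq hArep.odd hA, phiKM_right' (by omega), harg, hphix]
    omega
  -- B = A
  have hBA : Bmap x = Amap x := by
    rcases eq_or_lt_of_le h1 with heq | hlt
    · have hk7 : k = 7 ∧ m' = 0 := by
        rcases m'.eq_zero_or_pos with h0 | hpos
        · subst h0
          constructor <;> omega
        · exfalso
          obtain ⟨n, rfl⟩ : ∃ n, m' = n+1 := ⟨m'-1, by omega⟩
          have hee : (2:ℕ)^(n+1) = 2*2^n := by ring
          have hee2 : (2:ℕ)^(n+1+3) = 16*2^n := by ring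
          omega
      obtain ⟨rfl, rfl⟩ := hk7
      have hx : x = 7/8 := by rw [h.eq]; norm_num
      subst hx
      rw [Bmap_high (by norm_num) (by norm_num), Amap_high (by norm_num)]
      norm_num
    · have hx78 : ¬ x ≤ 7/8 := fun hh => by have := h.le_78_iff.1 hh; omega
      rw [Bmap_top hx78, Amap_high hx34]
  -- Ainv
  have hcastAi : ((k + 2^(m'+3) : ℕ):ℝ) = (k:ℝ) + 2^(m'+3) := by push_cast; ring
  have hAi : Ainvmap x = ((k + 2^(m'+3) : ℕ):ℝ)/2^(m'+4) := by
    rw [Ainvmap_high hx12, h.eq, hcastAi, div_add' _ _ _ (by positivity), div_div, ← pow_succ]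
    norm_num
  have hAirep : DyRep (Ainvmap x) (k + 2^(m'+3)) (m'+4) :=
    ⟨⟨t + 2^(m'+2), by omega⟩, by omega, by omega, hAi⟩
  have hAiphi : phi (Ainvmap x) = phi x + 1 := by
    have harg : 2^(m'+4) - (k + 2^(m'+3)) = j := by omega
    rw [phi_eq hAirep.odd hAi, phiKM_right' (by omega), harg, hphix]
    omega
  have hAmapAi : Amap (Ainvmap x) = x := by
    rw [Ainvmap_high hx12, Amap_high (by rw [not_le] at hx12 ⊢; linarith)]
    ring
  refine ⟨hArep.mem_dyadics, hAphi, hBA, hAirep.mem_dyadics, hAiphi, ?_, hAmapAi, ?_⟩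
  · rw [← not_lt]
    exact fun hh => by have := hAirep.lt_78_iff.1 hh; omega
  · rw [Binvmap_top hx34, Ainvmap_high hx12]
lemma eq_half_of_rep {x : ℝ} {k m : ℕ} (h : DyRep x k m) (heq : 2*k = 2^m) : x = 1/2 := by
  rw [h.eq]
  have h2 : (2:ℝ)*k = 2^m := by exact_mod_cast heq
  have hp : (2:ℝ)^m ≠ 0 := by positivity
  field_simp
  linarith

/-- case analysis on the position of a dyadic rational -/
lemma region_cases {x : ℝ} (hx : x ∈ dyadics) :
    ∃ k m, DyRep x k m ∧
      (2*k < 2^m ∨ x = 1/2 ∨ (2^m < 2*k ∧ 4*k < 3*2^m) ∨ (3*2^m ≤ 4*k ∧ 8*k < 7*2^m) ∨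
        7*2^m ≤ 8*k) := by
  obtain ⟨k, m, h⟩ := dy_rep hx
  refine ⟨k, m, h, ?_⟩
  rcases Nat.lt_or_ge (2*k) (2^m) with h1 | h1
  · exact Or.inl h1
  · rcases Nat.eq_or_lt_of_le h1 with heq | h1'
    · exact Or.inr (Or.inl (eq_half_of_rep h heq.symm))
    · rcases Nat.lt_or_ge (4*k) (3*2^m) with h2 | h2
      · exact Or.inr (Or.inr (Or.inl ⟨h1', h2⟩))
      · rcases Nat.lt_or_ge (8*k) (7*2^m) with h3 | h3
        · exact Or.inr (Or.inr (Or.inr (Or.inl ⟨h2, h3⟩)))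
        · exact Or.inr (Or.inr (Or.inr (Or.inr h3)))

lemma phi_step_A {x : ℝ} (hx : x ∈ dyadics) :
    phi (Amap x) = phi x + 1 ∨ phi (Amap x) + 1 = phi x := by
  obtain ⟨k, m, h, hc⟩ := region_cases hx
  rcases hc with h1 | h1 | ⟨h1, h2⟩ | ⟨h1, h2⟩ | h1
  · exact Or.inl (regionL h h1).2.1
  · subst h1
    exact Or.inl (by rw [regionRoot.2.1, phi_half])
  · exact Or.inl (regionM2 h h1 h2).2.1
  · exact Or.inr (regionM1 h h1 h2).2.1
  · exact Or.inr (regionT h h1).2.1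

lemma phi_step_B {x : ℝ} (hx : x ∈ dyadics) :
    Bmap x = x ∨ phi (Bmap x) = phi x + 1 ∨ phi (Bmap x) + 1 = phi x := by
  obtain ⟨k, m, h, hc⟩ := region_cases hx
  rcases hc with h1 | h1 | ⟨h1, h2⟩ | ⟨h1, h2⟩ | h1
  · exact Or.inl (regionL h h1).2.2.2.2.2.2.1
  · subst h1
    exact Or.inl regionRoot.2.2.2.2.2.2.2.2.1
  · exact Or.inr (Or.inl (regionM2 h h1 h2).2.2.2.2.1)
  · exact Or.inr (Or.inl (regionM1 h h1 h2).2.2.2.1)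
  · obtain ⟨-, hphi, hBA, -⟩ := regionT h h1
    exact Or.inr (Or.inr (by rw [hBA]; exact hphi))

lemma adj_phi {u v : dyadics} (h : schreier.Adj u v) :
    phi (u:ℝ) = phi (v:ℝ) + 1 ∨ phi (v:ℝ) = phi (u:ℝ) + 1 := by
  obtain ⟨hne, hc⟩ := h
  have hne' : (u:ℝ) ≠ (v:ℝ) := fun hh => hne (Subtype.ext hh)
  rcases hc with hc | hc | hc | hc
  · rcases phi_step_A u.2 with h' | h' <;> rw [hc] <;> omega
  · rcases phi_step_B u.2 with h' | h' | h'
    · exact absurd (hc.trans h') hne'.symm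
    · rw [hc]; omega
    · rw [hc]; omega
  · rcases phi_step_A v.2 with h' | h' <;> rw [hc] <;> omega
  · rcases phi_step_B v.2 with h' | h' | h'
    · exact absurd (hc.trans h') hne'
    · rw [hc]; omega
    · rw [hc]; omega

lemma walk_phi {u v : dyadics} (p : schreier.Walk u v) :
    phi (u:ℝ) ≤ phi (v:ℝ) + p.length ∧ phi (v:ℝ) ≤ phi (u:ℝ) + p.length := by
  induction p with
  | nil => simp
  | cons hadj p ih =>
    rcases adj_phi hadj with h' | h' <;>
      · rw [SimpleGraph.Walk.length_cons]
        omega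

/-- the basepoint -/
noncomputable def bpt : dyadics := ⟨1/2, half_mem_dyadics⟩

lemma dist_eq_phi : ∀ (n : ℕ) (v : dyadics), phi (v:ℝ) = n →
    schreier.Reachable bpt v ∧ schreier.dist bpt v = n := by
  intro n
  induction n with
  | zero =>
    intro v hv
    obtain ⟨k, m, h⟩ := dy_rep v.2
    have : (v:ℝ) = 1/2 := h.phi_zero_imp hv
    have hvb : v = bpt := Subtype.ext this
    subst hvb
    exact ⟨SimpleGraph.Reachable.refl _, SimpleGraph.dist_self⟩
  | succ n ih =>
    intro v hv
    -- find a neighbour `u` with `phi u = n`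
    obtain ⟨u, hadj, hphiu⟩ : ∃ u : dyadics, schreier.Adj u v ∧ phi (u:ℝ) = n := by
      obtain ⟨k, m, h, hc⟩ := region_cases v.2
      rcases hc with h1 | h1 | ⟨h1, h2⟩ | ⟨h1, h2⟩ | h1
      · obtain ⟨-, -, -, hAid, hAiphi, hAA, -⟩ := regionL h h1
        refine ⟨⟨Ainvmap v, hAid⟩, ⟨?_, Or.inl hAA.symm⟩, by show phi (Ainvmap (v:ℝ)) = n; omega⟩
        intro hh
        have hco : Ainvmap (v:ℝ) = (v:ℝ) := congrArg Subtype.val hh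
        rw [hco] at hAiphi
        omega
      · rw [h1] at hv
        rw [phi_half] at hv
        omega
      · obtain ⟨-, -, -, -, -, -, -, -, -, -, -, -, hBid, hBiphi, hBB⟩ := regionM2 h h1 h2
        refine ⟨⟨Binvmap v, hBid⟩, ⟨?_, Or.inr (Or.inl hBB.symm)⟩, by show phi (Binvmap (v:ℝ)) = n; omega⟩
        intro hh
        have hco : Binvmap (v:ℝ) = (v:ℝ) := congrArg Subtype.val hh
        rw [hco] at hBiphi
        omega
      · obtain ⟨hAd, hAphi, -⟩ := regionM1 h h1 h2
        refine ⟨⟨Amap v, hAd⟩, ?_, by show phi (Amap (v:ℝ)) = n; omega⟩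
        have : schreier.Adj v ⟨Amap v, hAd⟩ := by
          refine ⟨?_, Or.inl rfl⟩
          intro hh
          have hco : (v:ℝ) = Amap (v:ℝ) := congrArg Subtype.val hh
          rw [← hco] at hAphi
          omega
        exact this.symm
      · obtain ⟨hAd, hAphi, -⟩ := regionT h h1
        refine ⟨⟨Amap v, hAd⟩, ?_, by show phi (Amap (v:ℝ)) = n; omega⟩
        have : schreier.Adj v ⟨Amap v, hAd⟩ := by
          refine ⟨?_, Or.inl rfl⟩
          intro hh
          have hco : (v:ℝ) = Amap (v:ℝ) := congrArg Subtype.val hh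
          rw [← hco] at hAphi
          omega
        exact this.symm
    obtain ⟨hreach, hdist⟩ := ih u hphiu
    have hreachv : schreier.Reachable bpt v := hreach.trans hadj.reachable
    refine ⟨hreachv, le_antisymm ?_ ?_⟩
    · obtain ⟨p, hp⟩ := hreach.exists_walk_length_eq_dist
      have := SimpleGraph.dist_le (p.concat hadj)
      rw [SimpleGraph.Walk.length_concat, hp, hdist] at this
      exact this
    · obtain ⟨p, hp⟩ := hreachv.exists_walk_length_eq_dist
      have := (walk_phi p).2
      rw [hp] at this
      have hb : phi ((bpt : dyadics):ℝ) = 0 := phi_half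
      omega

lemma distD_eq_phi {y : ℝ} (hy : y ∈ dyadics) : distD (1/2) y = phi y := by
  rw [distD, dif_pos half_mem_dyadics, dif_pos hy]
  exact (dist_eq_phi (phi y) ⟨y, hy⟩ rfl).2
def alphaSet : Set (ℝ → ℝ) := {Amap, Ainvmap, Bmap, Binvmap}

noncomputable def eW (w : List (ℝ → ℝ)) : ℝ := w.foldl (fun x f => f x) (1/2)

def Geo (n : ℕ) : Set (List (ℝ → ℝ)) :=
  {w | w.length = n ∧ (∀ f ∈ w, f ∈ alphaSet) ∧
    ∀ k : ℕ, 1 ≤ k → k ≤ n → distD (1/2) (eW (w.take k)) = k}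

lemma eW_append (w : List (ℝ → ℝ)) (f : ℝ → ℝ) : eW (w ++ [f]) = f (eW w) := by
  simp [eW, List.foldl_append]

lemma mem_alpha {f : ℝ → ℝ} (hf : f ∈ alphaSet) :
    f = Amap ∨ f = Ainvmap ∨ f = Bmap ∨ f = Binvmap := by
  simpa [alphaSet] using hf

lemma mem_dy_A {x : ℝ} (hx : x ∈ dyadics) : Amap x ∈ dyadics := by
  obtain ⟨k, m, h, hc⟩ := region_cases hx
  rcases hc with h1 | h1 | ⟨h1, h2⟩ | ⟨h1, h2⟩ | h1
  · exact (regionL h h1).1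
  · subst h1; exact regionRoot.1
  · exact (regionM2 h h1 h2).1
  · exact (regionM1 h h1 h2).1
  · exact (regionT h h1).1

lemma mem_dy_Ai {x : ℝ} (hx : x ∈ dyadics) : Ainvmap x ∈ dyadics := by
  obtain ⟨k, m, h, hc⟩ := region_cases hx
  rcases hc with h1 | h1 | ⟨h1, h2⟩ | ⟨h1, h2⟩ | h1
  · exact (regionL h h1).2.2.2.1
  · subst h1; exact regionRoot.2.2.2.1
  · exact (regionM2 h h1 h2).2.2.2.2.2.2.2.1
  · exact (regionM1 h h1 h2).2.2.2.2.2.2.1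
  · exact (regionT h h1).2.2.2.1

lemma mem_dy_B {x : ℝ} (hx : x ∈ dyadics) : Bmap x ∈ dyadics := by
  obtain ⟨k, m, h, hc⟩ := region_cases hx
  rcases hc with h1 | h1 | ⟨h1, h2⟩ | ⟨h1, h2⟩ | h1
  · rw [(regionL h h1).2.2.2.2.2.2.1]; exact hx
  · subst h1; rw [regionRoot.2.2.2.2.2.2.2.2.1]; exact hx
  · exact (regionM2 h h1 h2).2.2.2.1
  · exact (regionM1 h h1 h2).2.2.1
  · rw [(regionT h h1).2.2.1]; exact (regionT h h1).1

lemma mem_dy_Bi {x : ℝ} (hx : x ∈ dyadics) : Binvmap x ∈ dyadics := by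
  obtain ⟨k, m, h, hc⟩ := region_cases hx
  rcases hc with h1 | h1 | ⟨h1, h2⟩ | ⟨h1, h2⟩ | h1
  · rw [(regionL h h1).2.2.2.2.2.2.2]; exact hx
  · subst h1; rw [regionRoot.2.2.2.2.2.2.2.2.2]; exact hx
  · exact (regionM2 h h1 h2).2.2.2.2.2.2.2.2.2.2.2.2.1
  · rw [(regionM1 h h1 h2).2.2.2.2.2.2.2.2.2.2]
    exact (regionM1 h h1 h2).2.2.2.2.2.2.1
  · rw [(regionT h h1).2.2.2.2.2.2.2]; exact (regionT h h1).2.2.2.1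

lemma mem_dy_of_alpha {f : ℝ → ℝ} (hf : f ∈ alphaSet) {x : ℝ} (hx : x ∈ dyadics) :
    f x ∈ dyadics := by
  rcases mem_alpha hf with rfl | rfl | rfl | rfl
  · exact mem_dy_A hx
  · exact mem_dy_Ai hx
  · exact mem_dy_B hx
  · exact mem_dy_Bi hx

lemma foldl_mem_dy : ∀ (w : List (ℝ → ℝ)) (x : ℝ), x ∈ dyadics →
    (∀ f ∈ w, f ∈ alphaSet) → w.foldl (fun x f => f x) x ∈ dyadics := by
  intro w
  induction w with
  | nil => intro x hx _; exact hx
  | cons f w ih =>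
    intro x hx hw
    exact ih (f x) (mem_dy_of_alpha (hw f (by simp)) hx) (fun g hg => hw g (by simp [hg]))

lemma eW_mem {w : List (ℝ → ℝ)} (hw : ∀ f ∈ w, f ∈ alphaSet) : eW w ∈ dyadics :=
  foldl_mem_dy w (1/2) half_mem_dyadics hw

lemma geo_zero : Geo 0 = {([] : List (ℝ → ℝ))} := by
  ext w
  simp only [Geo, Set.mem_setOf_eq, Set.mem_singleton_iff]
  constructor
  · rintro ⟨h1, -, -⟩
    exact List.length_eq_zero_iff.1 h1
  · rintro rfl
    exact ⟨rfl, by simp, fun k hk1 hk2 => by omega⟩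

lemma geo_dist {n : ℕ} {w : List (ℝ → ℝ)} (hw : w ∈ Geo n) :
    eW w ∈ dyadics ∧ phi (eW w) = n := by
  have hd : eW w ∈ dyadics := eW_mem hw.2.1
  refine ⟨hd, ?_⟩
  rcases n with _ | n
  · have : w = [] := List.length_eq_zero_iff.1 hw.1
    subst this
    have : eW ([] : List (ℝ → ℝ)) = 1/2 := rfl
    rw [this, phi_half]
  · have h1 := hw.2.2 (n+1) (by omega) (le_refl _)
    have ht : w.take (n+1) = w := List.take_of_length_le (by rw [hw.1])
    rw [ht] at h1
    rw [← distD_eq_phi hd, h1]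

lemma geo_succ_iff {n : ℕ} {w : List (ℝ → ℝ)} :
    w ∈ Geo (n+1) ↔ ∃ w' f, w' ∈ Geo n ∧ f ∈ alphaSet ∧ w = w' ++ [f] ∧
      phi (f (eW w')) = n + 1 := by
  constructor
  · intro hw
    have hne : w ≠ [] := by
      intro h
      rw [h] at hw
      simpa using hw.1
    have hsplit := List.dropLast_append_getLast hne
    have hlen : w.dropLast.length = n := by
      rw [List.length_dropLast, hw.1]
      omega
    refine ⟨w.dropLast, w.getLast hne, ⟨hlen, ?_, ?_⟩, hw.2.1 _ (List.getLast_mem hne), hsplit.symm, ?_⟩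
    · exact fun f hf => hw.2.1 f (List.dropLast_subset w hf)
    · intro k hk1 hk2
      have htk : w.dropLast.take k = w.take k := by
        rw [List.dropLast_eq_take, List.take_take]
        congr 1
        have hlw : w.length = n + 1 := hw.1
        omega
      rw [htk]
      exact hw.2.2 k hk1 (by omega)
    · have h1 := hw.2.2 (n+1) (by omega) (le_refl _)
      have ht : w.take (n+1) = w := List.take_of_length_le (by rw [hw.1])
      rw [ht] at h1
      have hde : eW w = w.getLast hne (eW w.dropLast) := by
        conv_lhs => rw [← hsplit]
        rw [eW_append]
      rw [hde] at h1
      have hdm : w.getLast hne (eW w.dropLast) ∈ dyadics := by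
        rw [← hde]
        exact eW_mem hw.2.1
      rw [← distD_eq_phi hdm, h1]
  · rintro ⟨w', f, hw', hf, rfl, hphi⟩
    refine ⟨by simp [hw'.1], ?_, ?_⟩
    · intro g hg
      rcases List.mem_append.1 hg with hg | hg
      · exact hw'.2.1 g hg
      · rw [List.mem_singleton.1 hg]
        exact hf
    · intro k hk1 hk2
      rcases Nat.lt_or_ge k (n+1) with hk | hk
      · rw [List.take_append_of_le_length (by rw [hw'.1]; omega)]
        exact hw'.2.2 k hk1 (by omega)
      · have hk' : k = n+1 := by omega
        subst hk'
        rw [List.take_of_length_le (by simp [hw'.1]), eW_append]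
        rw [distD_eq_phi (mem_dy_of_alpha hf (eW_mem hw'.2.1)), hphi]
lemma regionL' {x : ℝ} (hx : x ∈ dyadics) (h1 : x < 1/2) :
    Amap x ∈ dyadics ∧ phi (Amap x) = phi x + 1 ∧ Amap x < 1/2 ∧
    Ainvmap x ∈ dyadics ∧ phi (Ainvmap x) + 1 = phi x ∧ Amap (Ainvmap x) = x ∧
    Bmap x = x ∧ Binvmap x = x := by
  obtain ⟨k, m, h⟩ := dy_rep hx
  exact regionL h (h.lt_half_iff.1 h1)

lemma regionM2' {x : ℝ} (hx : x ∈ dyadics) (h1 : 1/2 < x) (h2 : x < 3/4) :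
    Amap x ∈ dyadics ∧ phi (Amap x) = phi x + 1 ∧ Amap x < 1/2 ∧
    Bmap x ∈ dyadics ∧ phi (Bmap x) = phi x + 1 ∧ 1/2 < Bmap x ∧ Bmap x < 3/4 ∧
    Ainvmap x ∈ dyadics ∧ phi (Ainvmap x) = phi x + 1 ∧ 3/4 ≤ Ainvmap x ∧ Ainvmap x < 7/8 ∧
    Amap (Ainvmap x) = x ∧
    Binvmap x ∈ dyadics ∧ phi (Binvmap x) + 1 = phi x ∧ Bmap (Binvmap x) = x := by
  obtain ⟨k, m, h⟩ := dy_rep hx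
  have hn1 : 2^m < 2*k := by
    by_contra hh
    push_neg at hh
    exact absurd (h.le_half_iff.2 hh) (not_le.2 h1)
  exact regionM2 h hn1 (h.lt_34_iff.1 h2)

lemma regionM1' {x : ℝ} (hx : x ∈ dyadics) (h1 : 3/4 ≤ x) (h2 : x < 7/8) :
    Amap x ∈ dyadics ∧ phi (Amap x) + 1 = phi x ∧
    Bmap x ∈ dyadics ∧ phi (Bmap x) = phi x + 1 ∧ 1/2 < Bmap x ∧ Bmap x < 3/4 ∧
    Ainvmap x ∈ dyadics ∧ phi (Ainvmap x) = phi x + 1 ∧ 7/8 ≤ Ainvmap x ∧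
    Amap (Ainvmap x) = x ∧ Binvmap x = Ainvmap x := by
  obtain ⟨k, m, h⟩ := dy_rep hx
  have hn1 : 3*2^m ≤ 4*k := by
    by_contra hh
    push_neg at hh
    exact absurd (h.lt_34_iff.2 hh) (not_lt.2 h1)
  exact regionM1 h hn1 (h.lt_78_iff.1 h2)

lemma regionT' {x : ℝ} (hx : x ∈ dyadics) (h1 : 7/8 ≤ x) :
    Amap x ∈ dyadics ∧ phi (Amap x) + 1 = phi x ∧ Bmap x = Amap x ∧
    Ainvmap x ∈ dyadics ∧ phi (Ainvmap x) = phi x + 1 ∧ 7/8 ≤ Ainvmap x ∧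
    Amap (Ainvmap x) = x ∧ Binvmap x = Ainvmap x := by
  obtain ⟨k, m, h⟩ := dy_rep hx
  have hn1 : 7*2^m ≤ 8*k := by
    by_contra hh
    push_neg at hh
    exact absurd (h.lt_78_iff.2 hh) (not_lt.2 h1)
  exact regionT h hn1

/-- classification of geodesic extensions by one letter -/
lemma step_class {n : ℕ} {x : ℝ} (hx : x ∈ dyadics) (hphix : phi x = n) (hn : 1 ≤ n)
    {f : ℝ → ℝ} (hf : f ∈ alphaSet) (hup : phi (f x) = n + 1) :
    (x < 1/2 ∧ f = Amap ∧ f x < 1/2) ∨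
    ((1/2 < x ∧ x < 3/4) ∧ ((f = Amap ∧ f x < 1/2) ∨
      (f = Ainvmap ∧ 3/4 ≤ f x ∧ f x < 7/8) ∨ (f = Bmap ∧ 1/2 < f x ∧ f x < 3/4))) ∨
    ((3/4 ≤ x ∧ x < 7/8) ∧ ((f = Bmap ∧ 1/2 < f x ∧ f x < 3/4) ∨
      ((f = Ainvmap ∨ f = Binvmap) ∧ 7/8 ≤ f x))) ∨
    (7/8 ≤ x ∧ ((f = Ainvmap ∨ f = Binvmap) ∧ 7/8 ≤ f x)) := by
  have hxne : x ≠ 1/2 := by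
    intro hh
    rw [hh, phi_half] at hphix
    omega
  rcases lt_trichotomy x (1/2) with hr1 | hr1 | hr1
  · -- region L
    obtain ⟨-, hA, hA2, -, hAi, -, hB, hBi⟩ := regionL' hx hr1
    rcases mem_alpha hf with rfl | rfl | rfl | rfl
    · exact Or.inl ⟨hr1, rfl, hA2⟩
    · exfalso; omega
    · exfalso; rw [hB] at hup; omega
    · exfalso; rw [hBi] at hup; omega
  · exact absurd hr1 hxne
  · rcases lt_trichotomy x (3/4) with hr2 | hr2 | hr2
    · -- region M2
      obtain ⟨-, hA, hA2, -, hB, hB1, hB2, -, hAi, hAi1, hAi2, -, -, hBi, -⟩ :=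
        regionM2' hx hr1 hr2
      rcases mem_alpha hf with rfl | rfl | rfl | rfl
      · exact Or.inr (Or.inl ⟨⟨hr1, hr2⟩, Or.inl ⟨rfl, hA2⟩⟩)
      · exact Or.inr (Or.inl ⟨⟨hr1, hr2⟩, Or.inr (Or.inl ⟨rfl, hAi1, hAi2⟩)⟩)
      · exact Or.inr (Or.inl ⟨⟨hr1, hr2⟩, Or.inr (Or.inr ⟨rfl, hB1, hB2⟩)⟩)
      · exfalso; omega
    · -- x = 3/4 : region M1
      have hr2' : (3:ℝ)/4 ≤ x := le_of_eq hr2.symm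
      have hr3 : x < 7/8 := by rw [hr2]; norm_num
      obtain ⟨-, hA, -, hB, hB1, hB2, -, hAi, hAi1, -, hBi⟩ := regionM1' hx hr2' hr3
      rcases mem_alpha hf with rfl | rfl | rfl | rfl
      · exfalso; omega
      · exact Or.inr (Or.inr (Or.inl ⟨⟨hr2', hr3⟩, Or.inr ⟨Or.inl rfl, hAi1⟩⟩))
      · exact Or.inr (Or.inr (Or.inl ⟨⟨hr2', hr3⟩, Or.inl ⟨rfl, hB1, hB2⟩⟩))
      · exact Or.inr (Or.inr (Or.inl ⟨⟨hr2', hr3⟩, Or.inr ⟨Or.inr rfl, by rw [hBi]; exact hAi1⟩⟩))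
    · rcases lt_trichotomy x (7/8) with hr3 | hr3 | hr3
      · -- region M1
        obtain ⟨-, hA, -, hB, hB1, hB2, -, hAi, hAi1, -, hBi⟩ :=
          regionM1' hx (le_of_lt hr2) hr3
        rcases mem_alpha hf with rfl | rfl | rfl | rfl
        · exfalso; omega
        · exact Or.inr (Or.inr (Or.inl ⟨⟨le_of_lt hr2, hr3⟩, Or.inr ⟨Or.inl rfl, hAi1⟩⟩))
        · exact Or.inr (Or.inr (Or.inl ⟨⟨le_of_lt hr2, hr3⟩, Or.inl ⟨rfl, hB1, hB2⟩⟩))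
        · exact Or.inr (Or.inr (Or.inl ⟨⟨le_of_lt hr2, hr3⟩,
            Or.inr ⟨Or.inr rfl, by rw [hBi]; exact hAi1⟩⟩))
      · -- region T (x = 7/8)
        have hr3' : (7:ℝ)/8 ≤ x := le_of_eq hr3.symm
        obtain ⟨-, hA, hBA, -, hAi, hAi1, -, hBi⟩ := regionT' hx hr3'
        rcases mem_alpha hf with rfl | rfl | rfl | rfl
        · exfalso; omega
        · exact Or.inr (Or.inr (Or.inr ⟨hr3', Or.inl rfl, hAi1⟩))
        · exfalso; rw [hBA] at hup; omega
        · exact Or.inr (Or.inr (Or.inr ⟨hr3', Or.inr rfl, by rw [hBi]; exact hAi1⟩))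
      · -- region T
        obtain ⟨-, hA, hBA, -, hAi, hAi1, -, hBi⟩ := regionT' hx (le_of_lt hr3)
        rcases mem_alpha hf with rfl | rfl | rfl | rfl
        · exfalso; omega
        · exact Or.inr (Or.inr (Or.inr ⟨le_of_lt hr3, Or.inl rfl, hAi1⟩))
        · exfalso; rw [hBA] at hup; omega
        · exact Or.inr (Or.inr (Or.inr ⟨le_of_lt hr3, Or.inr rfl, by rw [hBi]; exact hAi1⟩))
def GeoL (n : ℕ) : Set (List (ℝ → ℝ)) := {w | w ∈ Geo n ∧ eW w < 1/2}
def GeoM2 (n : ℕ) : Set (List (ℝ → ℝ)) := {w | w ∈ Geo n ∧ 1/2 < eW w ∧ eW w < 3/4}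
def GeoM1 (n : ℕ) : Set (List (ℝ → ℝ)) := {w | w ∈ Geo n ∧ 3/4 ≤ eW w ∧ eW w < 7/8}
def GeoT (n : ℕ) : Set (List (ℝ → ℝ)) := {w | w ∈ Geo n ∧ 7/8 ≤ eW w}

lemma alpha_A : Amap ∈ alphaSet := by simp [alphaSet]
lemma alpha_Ai : Ainvmap ∈ alphaSet := by simp [alphaSet]
lemma alpha_B : Bmap ∈ alphaSet := by simp [alphaSet]
lemma alpha_Bi : Binvmap ∈ alphaSet := by simp [alphaSet]

/-- append one geodesic letter -/
lemma geo_append {n : ℕ} {w : List (ℝ → ℝ)} {f : ℝ → ℝ} (hw : w ∈ Geo n) (hf : f ∈ alphaSet)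
    (hphi : phi (f (eW w)) = n + 1) : w ++ [f] ∈ Geo (n+1) :=
  geo_succ_iff.2 ⟨w, f, hw, hf, rfl, hphi⟩

lemma geo_partition {n : ℕ} (hn : 1 ≤ n) {w : List (ℝ → ℝ)} (hw : w ∈ Geo n) :
    w ∈ GeoL n ∨ w ∈ GeoM2 n ∨ w ∈ GeoM1 n ∨ w ∈ GeoT n := by
  obtain ⟨hd, hphi⟩ := geo_dist hw
  have hne : eW w ≠ 1/2 := by
    intro hh
    rw [hh, phi_half] at hphi
    omega
  rcases lt_trichotomy (eW w) (1/2) with h1 | h1 | h1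
  · exact Or.inl ⟨hw, h1⟩
  · exact absurd h1 hne
  · rcases lt_trichotomy (eW w) (3/4) with h2 | h2 | h2
    · exact Or.inr (Or.inl ⟨hw, h1, h2⟩)
    · exact Or.inr (Or.inr (Or.inl ⟨hw, le_of_eq h2.symm, by rw [h2]; norm_num⟩))
    · rcases lt_trichotomy (eW w) (7/8) with h3 | h3 | h3
      · exact Or.inr (Or.inr (Or.inl ⟨hw, le_of_lt h2, h3⟩))
      · exact Or.inr (Or.inr (Or.inr ⟨hw, le_of_eq h3.symm⟩))
      · exact Or.inr (Or.inr (Or.inr ⟨hw, le_of_lt h3⟩))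

lemma geoL_succ {n : ℕ} (hn : 1 ≤ n) :
    GeoL (n+1) = (fun w => w ++ [Amap]) '' (GeoL n ∪ GeoM2 n) := by
  ext w
  constructor
  · rintro ⟨hw, hend⟩
    obtain ⟨w', f, hw', hf, rfl, hphi⟩ := geo_succ_iff.1 hw
    obtain ⟨hd, hphix⟩ := geo_dist hw'
    rw [eW_append] at hend
    rcases step_class hd hphix hn hf hphi with ⟨h1, rfl, -⟩ | ⟨h1, hc⟩ | ⟨h1, hc⟩ | ⟨h1, hc⟩
    · exact ⟨w', Or.inl ⟨hw', h1⟩, rfl⟩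
    · rcases hc with ⟨rfl, -⟩ | ⟨rfl, hc1, -⟩ | ⟨rfl, hc1, -⟩
      · exact ⟨w', Or.inr ⟨hw', h1⟩, rfl⟩
      · linarith
      · linarith
    · rcases hc with ⟨rfl, hc1, -⟩ | ⟨hor, hc1⟩
      · linarith
      · linarith
    · obtain ⟨hor, hc1⟩ := hc
      linarith
  · rintro ⟨w', hw', rfl⟩
    rcases hw' with ⟨hw', hend⟩ | ⟨hw', hend1, hend2⟩
    · obtain ⟨hd, hphix⟩ := geo_dist hw'
      obtain ⟨-, hA, hA2, -⟩ := regionL' hd hend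
      refine ⟨geo_append hw' alpha_A (by rw [hA, hphix]), ?_⟩
      rw [eW_append]
      exact hA2
    · obtain ⟨hd, hphix⟩ := geo_dist hw'
      obtain ⟨-, hA, hA2, -⟩ := regionM2' hd hend1 hend2
      refine ⟨geo_append hw' alpha_A (by rw [hA, hphix]), ?_⟩
      rw [eW_append]
      exact hA2

lemma geoM1_succ {n : ℕ} (hn : 1 ≤ n) :
    GeoM1 (n+1) = (fun w => w ++ [Ainvmap]) '' (GeoM2 n) := by
  ext w
  constructor
  · rintro ⟨hw, hend1, hend2⟩
    obtain ⟨w', f, hw', hf, rfl, hphi⟩ := geo_succ_iff.1 hw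
    obtain ⟨hd, hphix⟩ := geo_dist hw'
    rw [eW_append] at hend1 hend2
    rcases step_class hd hphix hn hf hphi with ⟨h1, rfl, hfx⟩ | ⟨h1, hc⟩ | ⟨h1, hc⟩ | ⟨h1, hc⟩
    · linarith
    · rcases hc with ⟨rfl, hfx⟩ | ⟨rfl, hc1, -⟩ | ⟨rfl, hc1, hc2⟩
      · linarith
      · exact ⟨w', ⟨hw', h1⟩, rfl⟩
      · linarith
    · rcases hc with ⟨rfl, hc1, hc2⟩ | ⟨hor, hc1⟩
      · linarith
      · linarith
    · obtain ⟨hor, hc1⟩ := hc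
      linarith
  · rintro ⟨w', ⟨hw', hend1, hend2⟩, rfl⟩
    obtain ⟨hd, hphix⟩ := geo_dist hw'
    obtain ⟨-, -, -, -, -, -, -, -, hAi, hAi1, hAi2, -⟩ := regionM2' hd hend1 hend2
    refine ⟨geo_append hw' alpha_Ai (by rw [hAi, hphix]), ?_, ?_⟩ <;> rw [eW_append]
    · exact hAi1
    · exact hAi2

lemma geoM2_succ {n : ℕ} (hn : 1 ≤ n) :
    GeoM2 (n+1) = (fun w => w ++ [Bmap]) '' (GeoM1 n ∪ GeoM2 n) := by
  ext w
  constructor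
  · rintro ⟨hw, hend1, hend2⟩
    obtain ⟨w', f, hw', hf, rfl, hphi⟩ := geo_succ_iff.1 hw
    obtain ⟨hd, hphix⟩ := geo_dist hw'
    rw [eW_append] at hend1 hend2
    rcases step_class hd hphix hn hf hphi with ⟨h1, rfl, hfx⟩ | ⟨h1, hc⟩ | ⟨h1, hc⟩ | ⟨h1, hc⟩
    · linarith
    · rcases hc with ⟨rfl, hfx⟩ | ⟨rfl, hc1, -⟩ | ⟨rfl, hc1, hc2⟩
      · linarith
      · linarith
      · exact ⟨w', Or.inr ⟨hw', h1⟩, rfl⟩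
    · rcases hc with ⟨rfl, hc1, hc2⟩ | ⟨hor, hc1⟩
      · exact ⟨w', Or.inl ⟨hw', h1⟩, rfl⟩
      · linarith
    · obtain ⟨hor, hc1⟩ := hc
      linarith
  · rintro ⟨w', hw', rfl⟩
    rcases hw' with ⟨hw', hend1, hend2⟩ | ⟨hw', hend1, hend2⟩
    · obtain ⟨hd, hphix⟩ := geo_dist hw'
      obtain ⟨-, -, -, hB, hB1, hB2, -⟩ := regionM1' hd hend1 hend2
      refine ⟨geo_append hw' alpha_B (by rw [hB, hphix]), ?_, ?_⟩ <;> rw [eW_append]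
      · exact hB1
      · exact hB2
    · obtain ⟨hd, hphix⟩ := geo_dist hw'
      obtain ⟨-, -, -, -, hB, hB1, hB2, -⟩ := regionM2' hd hend1 hend2
      refine ⟨geo_append hw' alpha_B (by rw [hB, hphix]), ?_, ?_⟩ <;> rw [eW_append]
      · exact hB1
      · exact hB2

lemma geoT_succ {n : ℕ} (hn : 1 ≤ n) :
    GeoT (n+1) = (fun w => w ++ [Ainvmap]) '' (GeoM1 n ∪ GeoT n) ∪
      (fun w => w ++ [Binvmap]) '' (GeoM1 n ∪ GeoT n) := by
  ext w
  constructor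
  · rintro ⟨hw, hend⟩
    obtain ⟨w', f, hw', hf, rfl, hphi⟩ := geo_succ_iff.1 hw
    obtain ⟨hd, hphix⟩ := geo_dist hw'
    rw [eW_append] at hend
    rcases step_class hd hphix hn hf hphi with ⟨h1, rfl, hfx⟩ | ⟨h1, hc⟩ | ⟨h1, hc⟩ | ⟨h1, hc⟩
    · linarith
    · rcases hc with ⟨rfl, hfx⟩ | ⟨rfl, hc1, hc2⟩ | ⟨rfl, hc1, hc2⟩
      · linarith
      · linarith
      · linarith
    · rcases hc with ⟨rfl, hc1, hc2⟩ | ⟨hor, hc1⟩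
      · linarith
      · rcases hor with rfl | rfl
        · exact Or.inl ⟨w', Or.inl ⟨hw', h1⟩, rfl⟩
        · exact Or.inr ⟨w', Or.inl ⟨hw', h1⟩, rfl⟩
    · obtain ⟨hor, hc1⟩ := hc
      rcases hor with rfl | rfl
      · exact Or.inl ⟨w', Or.inr ⟨hw', h1⟩, rfl⟩
      · exact Or.inr ⟨w', Or.inr ⟨hw', h1⟩, rfl⟩
  · rintro (⟨w', hw', rfl⟩ | ⟨w', hw', rfl⟩)
    · rcases hw' with ⟨hw', hend1, hend2⟩ | ⟨hw', hend⟩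
      · obtain ⟨hd, hphix⟩ := geo_dist hw'
        obtain ⟨-, -, -, -, -, -, -, hAi, hAi1, -⟩ := regionM1' hd hend1 hend2
        refine ⟨geo_append hw' alpha_Ai (by rw [hAi, hphix]), ?_⟩
        rw [eW_append]
        exact hAi1
      · obtain ⟨hd, hphix⟩ := geo_dist hw'
        obtain ⟨-, -, -, -, hAi, hAi1, -⟩ := regionT' hd hend
        refine ⟨geo_append hw' alpha_Ai (by rw [hAi, hphix]), ?_⟩
        rw [eW_append]
        exact hAi1
    · rcases hw' with ⟨hw', hend1, hend2⟩ | ⟨hw', hend⟩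
      · obtain ⟨hd, hphix⟩ := geo_dist hw'
        obtain ⟨-, -, -, -, -, -, -, hAi, hAi1, -, hBi⟩ := regionM1' hd hend1 hend2
        refine ⟨geo_append hw' alpha_Bi (by rw [hBi, hAi, hphix]), ?_⟩
        rw [eW_append, hBi]
        exact hAi1
      · obtain ⟨hd, hphix⟩ := geo_dist hw'
        obtain ⟨-, -, -, -, hAi, hAi1, -, hBi⟩ := regionT' hd hend
        refine ⟨geo_append hw' alpha_Bi (by rw [hBi, hAi, hphix]), ?_⟩
        rw [eW_append, hBi]
        exact hAi1
lemma last_letter_eq {w v : List (ℝ → ℝ)} {a b : ℝ → ℝ} (h : w ++ [a] = v ++ [b]) : a = b := by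
  have h2 := congrArg List.getLast? h
  simpa using h2

lemma Ai_ne_Bi : Ainvmap ≠ Binvmap := by
  intro h
  have h2 := congrFun h (3/5)
  rw [Ainvmap_high (by norm_num), Binvmap_mid (by norm_num) (by norm_num)] at h2
  norm_num at h2

lemma alpha_finite : alphaSet.Finite := by
  rw [alphaSet]
  exact (((Set.finite_singleton _).insert _).insert _).insert _

lemma words_finite : ∀ n : ℕ, {w : List (ℝ → ℝ) | w.length = n ∧ ∀ f ∈ w, f ∈ alphaSet}.Finite := by
  intro n
  induction n with
  | zero =>
    apply Set.Finite.subset (Set.finite_singleton ([] : List (ℝ → ℝ)))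
    rintro w ⟨h1, -⟩
    exact List.length_eq_zero_iff.1 h1
  | succ n ih =>
    apply Set.Finite.subset (Set.Finite.image2 List.cons alpha_finite ih)
    rintro w ⟨h1, h2⟩
    rcases w with _ | ⟨f, w'⟩
    · simp at h1
    · exact ⟨f, h2 f (by simp), w', ⟨by simpa using h1, fun g hg => h2 g (by simp [hg])⟩, rfl⟩

lemma geo_finite (n : ℕ) : (Geo n).Finite :=
  (words_finite n).subset (fun w hw => ⟨hw.1, hw.2.1⟩)

lemma geoL_finite (n : ℕ) : (GeoL n).Finite := (geo_finite n).subset (fun w hw => hw.1)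
lemma geoM1_finite (n : ℕ) : (GeoM1 n).Finite := (geo_finite n).subset (fun w hw => hw.1)
lemma geoM2_finite (n : ℕ) : (GeoM2 n).Finite := (geo_finite n).subset (fun w hw => hw.1)
lemma geoT_finite (n : ℕ) : (GeoT n).Finite := (geo_finite n).subset (fun w hw => hw.1)

lemma disj_L_M2 (n : ℕ) : Disjoint (GeoL n) (GeoM2 n) := by
  rw [Set.disjoint_left]
  rintro w ⟨-, h1⟩ ⟨-, h2, -⟩
  linarith

lemma disj_L_M1 (n : ℕ) : Disjoint (GeoL n) (GeoM1 n) := by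
  rw [Set.disjoint_left]
  rintro w ⟨-, h1⟩ ⟨-, h2, -⟩
  linarith

lemma disj_L_T (n : ℕ) : Disjoint (GeoL n) (GeoT n) := by
  rw [Set.disjoint_left]
  rintro w ⟨-, h1⟩ ⟨-, h2⟩
  linarith

lemma disj_M2_M1 (n : ℕ) : Disjoint (GeoM2 n) (GeoM1 n) := by
  rw [Set.disjoint_left]
  rintro w ⟨-, -, h1⟩ ⟨-, h2, -⟩
  linarith

lemma disj_M2_T (n : ℕ) : Disjoint (GeoM2 n) (GeoT n) := by
  rw [Set.disjoint_left]
  rintro w ⟨-, -, h1⟩ ⟨-, h2⟩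
  linarith

lemma disj_M1_T (n : ℕ) : Disjoint (GeoM1 n) (GeoT n) := by
  rw [Set.disjoint_left]
  rintro w ⟨-, -, h1⟩ ⟨-, h2⟩
  linarith

lemma eW_single (f : ℝ → ℝ) : eW [f] = f (1/2) := rfl

lemma geo_one_cases {w : List (ℝ → ℝ)} (hw : w ∈ Geo 1) :
    (w = [Amap] ∧ eW w < 1/2) ∨ (w = [Ainvmap] ∧ 3/4 ≤ eW w ∧ eW w < 7/8) := by
  obtain ⟨w', f, hw', hf, rfl, hphi⟩ := geo_succ_iff.1 hw
  have hwnil : w' = [] := by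
    rw [geo_zero] at hw'
    exact hw'
  subst hwnil
  have heW : eW ([] : List (ℝ → ℝ)) = 1/2 := rfl
  rw [heW] at hphi
  rcases mem_alpha hf with rfl | rfl | rfl | rfl
  · left
    refine ⟨by simp, ?_⟩
    rw [List.nil_append, eW_single]
    exact regionRoot.2.2.1
  · right
    refine ⟨by simp, ?_, ?_⟩ <;> rw [List.nil_append, eW_single]
    · exact regionRoot.2.2.2.2.2.1
    · exact regionRoot.2.2.2.2.2.2.1
  · exfalso
    rw [regionRoot.2.2.2.2.2.2.2.2.1, phi_half] at hphi
    omega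
  · exfalso
    rw [regionRoot.2.2.2.2.2.2.2.2.2, phi_half] at hphi
    omega

lemma geo_one_L : GeoL 1 = {[Amap]} := by
  ext w
  constructor
  · rintro ⟨hw, hend⟩
    rcases geo_one_cases hw with ⟨rfl, -⟩ | ⟨rfl, h1, -⟩
    · rfl
    · exfalso; linarith
  · rintro rfl
    have h0 : ([] : List (ℝ → ℝ)) ∈ Geo 0 := by rw [geo_zero]; rfl
    have hm : ([Amap] : List (ℝ → ℝ)) = [] ++ [Amap] := rfl
    refine ⟨?_, ?_⟩
    · rw [hm]
      exact geo_append h0 alpha_A (by rw [show eW ([] : List (ℝ → ℝ)) = 1/2 from rfl]; simpa using regionRoot.2.1)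
    · rw [eW_single]
      exact regionRoot.2.2.1

lemma geo_one_M1 : GeoM1 1 = {[Ainvmap]} := by
  ext w
  constructor
  · rintro ⟨hw, hend1, hend2⟩
    rcases geo_one_cases hw with ⟨rfl, h1⟩ | ⟨rfl, -, -⟩
    · exfalso; linarith
    · rfl
  · rintro rfl
    have h0 : ([] : List (ℝ → ℝ)) ∈ Geo 0 := by rw [geo_zero]; rfl
    have hm : ([Ainvmap] : List (ℝ → ℝ)) = [] ++ [Ainvmap] := rfl
    refine ⟨?_, ?_, ?_⟩
    · rw [hm]
      exact geo_append h0 alpha_Ai (by rw [show eW ([] : List (ℝ → ℝ)) = 1/2 from rfl]; simpa using regionRoot.2.2.2.2.1)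
    · rw [eW_single]
      exact regionRoot.2.2.2.2.2.1
    · rw [eW_single]
      exact regionRoot.2.2.2.2.2.2.1

lemma geo_one_M2 : GeoM2 1 = ∅ := by
  ext w
  simp only [Set.mem_empty_iff_false, iff_false]
  rintro ⟨hw, h1, h2⟩
  rcases geo_one_cases hw with ⟨rfl, h3⟩ | ⟨rfl, h3, -⟩ <;> linarith

lemma geo_one_T : GeoT 1 = ∅ := by
  ext w
  simp only [Set.mem_empty_iff_false, iff_false]
  rintro ⟨hw, h1⟩
  rcases geo_one_cases hw with ⟨rfl, h3⟩ | ⟨rfl, -, h3⟩ <;> linarith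

lemma counts : ∀ n : ℕ, 1 ≤ n →
    (GeoL n).ncard = (GeoM1 n).ncard + (GeoM2 n).ncard ∧
    (GeoL n).ncard + (GeoM1 n).ncard + (GeoM2 n).ncard + (GeoT n).ncard = 2^n := by
  intro n
  induction n with
  | zero => omega
  | succ n ih =>
    intro _
    rcases Nat.eq_zero_or_pos n with rfl | hn
    · rw [geo_one_L, geo_one_M1, geo_one_M2, geo_one_T]
      simp
    · obtain ⟨ih1, ih2⟩ := ih hn
      have hL : (GeoL (n+1)).ncard = (GeoL n).ncard + (GeoM2 n).ncard := by
        rw [geoL_succ hn, Set.ncard_image_of_injective _ (List.append_left_injective [Amap]),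
          Set.ncard_union_eq (disj_L_M2 n) (geoL_finite n) (geoM2_finite n)]
      have hM1 : (GeoM1 (n+1)).ncard = (GeoM2 n).ncard := by
        rw [geoM1_succ hn, Set.ncard_image_of_injective _ (List.append_left_injective [Ainvmap])]
      have hM2 : (GeoM2 (n+1)).ncard = (GeoM1 n).ncard + (GeoM2 n).ncard := by
        rw [geoM2_succ hn, Set.ncard_image_of_injective _ (List.append_left_injective [Bmap]),
          Set.ncard_union_eq ((disj_M2_M1 n).symm) (geoM1_finite n) (geoM2_finite n)]
      have hT : (GeoT (n+1)).ncard =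
          ((GeoM1 n).ncard + (GeoT n).ncard) + ((GeoM1 n).ncard + (GeoT n).ncard) := by
        rw [geoT_succ hn]
        have hdisj : Disjoint ((fun w => w ++ [Ainvmap]) '' (GeoM1 n ∪ GeoT n))
            ((fun w => w ++ [Binvmap]) '' (GeoM1 n ∪ GeoT n)) := by
          rw [Set.disjoint_left]
          rintro w ⟨w1, -, rfl⟩ ⟨w2, -, heq⟩
          exact Ai_ne_Bi (last_letter_eq heq.symm)
        have hfin : ((GeoM1 n) ∪ (GeoT n)).Finite := (geoM1_finite n).union (geoT_finite n)
        rw [Set.ncard_union_eq hdisj (hfin.image _) (hfin.image _),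
          Set.ncard_image_of_injective _ (List.append_left_injective [Ainvmap]),
          Set.ncard_image_of_injective _ (List.append_left_injective [Binvmap]),
          Set.ncard_union_eq (disj_M1_T n) (geoM1_finite n) (geoT_finite n)]
      constructor
      · omega
      · rw [hL, hM1, hM2, hT, pow_succ]
        omega

lemma geo_union {n : ℕ} (hn : 1 ≤ n) :
    Geo n = GeoL n ∪ GeoM2 n ∪ GeoM1 n ∪ GeoT n := by
  ext w
  constructor
  · intro hw
    rcases geo_partition hn hw with h | h | h | h
    · exact Or.inl (Or.inl (Or.inl h))
    · exact Or.inl (Or.inl (Or.inr h))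
    · exact Or.inl (Or.inr h)
    · exact Or.inr h
  · rintro ((( h | h) | h) | h) <;> exact h.1

/-- There are exactly `2^n` sequences `(s_1, …, s_n)` of letters from `{A, A⁻¹, B, B⁻¹}`
such that for each `1 ≤ k ≤ n` the graph distance in `𝓗` from `1/2` to
`(s_k ∘ ⋯ ∘ s_1)(1/2)` is exactly `k`: the geodesic growth function of `𝓗` at `1/2`
is `1/(1-2z)`. -/
theorem schreier_geodesic_growth (n : ℕ) :
    {w : List (ℝ → ℝ) | w.length = n ∧
      (∀ f ∈ w, f ∈ ({Amap, Ainvmap, Bmap, Binvmap} : Set (ℝ → ℝ))) ∧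
      (∀ k : ℕ, 1 ≤ k → k ≤ n →
        distD (1/2) ((w.take k).foldl (fun x f => f x) (1/2)) = k)}.ncard = 2 ^ n := by
  have hset : {w : List (ℝ → ℝ) | w.length = n ∧
      (∀ f ∈ w, f ∈ ({Amap, Ainvmap, Bmap, Binvmap} : Set (ℝ → ℝ))) ∧
      (∀ k : ℕ, 1 ≤ k → k ≤ n →
        distD (1/2) ((w.take k).foldl (fun x f => f x) (1/2)) = k)} = Geo n := rfl
  rw [hset]
  rcases Nat.eq_zero_or_pos n with rfl | hn
  · rw [geo_zero]
    simp
  · have h1 : Disjoint (GeoL n ∪ GeoM2 n) (GeoM1 n) :=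
      Set.disjoint_union_left.2 ⟨disj_L_M1 n, (disj_M2_M1 n)⟩
    have h2 : Disjoint (GeoL n ∪ GeoM2 n ∪ GeoM1 n) (GeoT n) :=
      Set.disjoint_union_left.2 ⟨Set.disjoint_union_left.2 ⟨disj_L_T n, disj_M2_T n⟩, disj_M1_T n⟩
    rw [geo_union hn,
      Set.ncard_union_eq h2 (((geoL_finite n).union (geoM2_finite n)).union (geoM1_finite n))
        (geoT_finite n),
      Set.ncard_union_eq h1 ((geoL_finite n).union (geoM2_finite n)) (geoM1_finite n),
      Set.ncard_union_eq (disj_L_M2 n) (geoL_finite n) (geoM2_finite n)]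
    obtain ⟨-, hsum⟩ := counts n hn
    omega
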